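/- Let A be a DG R-algebra and M, N DG A-modules. There is an injective homomorphism of abelian groups κ: H_0(Hom_A(Σ^{-1}M, N)) → YExt^1_A(M, N) whose image is exactly the set of equivalence classes of graded-split short exact sequences 0 → N → X → M → 0 of DG A-modules. In particular, if M is graded-projective then κ is bijective and H_{−1}(Hom_A(M, N)) ≅ YExt^1_A(M, N). -/

import Mathlib

/-!
A cycle `λ ∈ Hom_A(M,N)_{-1}` twists the differential of `N ⊕ M` into `[[∂^N, λ],[0, ∂^M]]`, an
extension that splits as graded modules. Changing `λ` by a boundary `∂v` is realised by the
shear `(n, m) ↦ (n + v m, m)`; conversely an equivalence of two twisted extensions fixes `N` and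
lifts `id_M`, so it is such a shear, and its corner `v` is a null-homotopy of the difference.
A graded splitting `(h, k)` of an arbitrary extension recovers it as the twist by the cycle
`h ∘ (∂k − k∂)`, and over a graded-projective `M` a graded section `k` always exists.
For the Baer sum of the twists by `λ` and `λ'`, the section `z ↦ (z, (0, z₂))` of the pullback
commutes with the differentials only up to the antidiagonal copy of `N`; once that is divided
out it becomes an equivalence with the twist by `λ + λ'`.
-/

open Function

/-- A chain complex of `R`-modules, indexed homologically over `ℤ`. -/
structure Cx (R : Type) [CommRing R] where
  X : ℤ → Type
  [acg : ∀ i, AddCommGroup (X i)]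
  [mod : ∀ i, Module R (X i)]
  d : ∀ i, X i →ₗ[R] X (i - 1)
  d_sq : ∀ i x, d (i - 1) (d i x) = 0

attribute [instance] Cx.acg Cx.mod

variable {R : Type} [CommRing R]

/-- Transport along an equality of degrees. -/
def Cx.cst (M : Cx R) {i j : ℤ} (h : i = j) : M.X i →ₗ[R] M.X j where
  toFun x := congrArg M.X h ▸ x
  map_add' := by subst h; intro x y; rfl
  map_smul' := by subst h; intro r x; rfl

/-- A positively graded, graded commutative DG `R`-algebra. -/
structure DGAlg (R : Type) [CommRing R] extends Cx R where
  one : toCx.X 0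
  mul : ∀ {i j : ℤ}, toCx.X i → toCx.X j → toCx.X (i + j)
  pos : ∀ i : ℤ, i < 0 → Subsingleton (toCx.X i)
  mul_add : ∀ {i j} (a : toCx.X i) (b c : toCx.X j), mul a (b + c) = mul a b + mul a c
  add_mul : ∀ {i j} (a b : toCx.X i) (c : toCx.X j), mul (a + b) c = mul a c + mul b c
  smul_mul : ∀ {i j} (r : R) (a : toCx.X i) (b : toCx.X j), mul (r • a) b = r • mul a b
  mul_smul : ∀ {i j} (r : R) (a : toCx.X i) (b : toCx.X j), mul a (r • b) = r • mul a b
  one_mul : ∀ {i} (a : toCx.X i), toCx.cst (zero_add i) (mul one a) = a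
  mul_one : ∀ {i} (a : toCx.X i), toCx.cst (add_zero i) (mul a one) = a
  mul_assoc : ∀ {i j k} (a : toCx.X i) (b : toCx.X j) (c : toCx.X k),
    toCx.cst (add_assoc i j k) (mul (mul a b) c) = mul a (mul b c)
  mul_comm : ∀ {i j} (a : toCx.X i) (b : toCx.X j),
    mul a b = ((i * j).negOnePow : ℤ) • toCx.cst (add_comm j i) (mul b a)
  leibniz : ∀ {i j} (a : toCx.X i) (b : toCx.X j),
    toCx.d (i + j) (mul a b) =
      toCx.cst (by omega) (mul (toCx.d i a) b) +
      (i.negOnePow : ℤ) • toCx.cst (by omega) (mul a (toCx.d j b))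

/-- A DG module over a DG `R`-algebra `A`. -/
structure DGMod (R : Type) [CommRing R] (A : DGAlg R) extends Cx R where
  smul : ∀ {i j : ℤ}, A.X i → toCx.X j → toCx.X (i + j)
  smul_add : ∀ {i j} (a : A.X i) (m m' : toCx.X j), smul a (m + m') = smul a m + smul a m'
  add_smul : ∀ {i j} (a a' : A.X i) (m : toCx.X j), smul (a + a') m = smul a m + smul a' m
  smul_rsmul : ∀ {i j} (r : R) (a : A.X i) (m : toCx.X j), smul (r • a) m = r • smul a m
  rsmul_smul : ∀ {i j} (r : R) (a : A.X i) (m : toCx.X j), smul a (r • m) = r • smul a m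
  one_smul : ∀ {j} (m : toCx.X j), toCx.cst (zero_add j) (smul A.one m) = m
  mul_smul : ∀ {i j k} (a : A.X i) (b : A.X j) (m : toCx.X k),
    toCx.cst (add_assoc i j k) (smul (A.mul a b) m) = smul a (smul b m)
  leibniz : ∀ {i j} (a : A.X i) (m : toCx.X j),
    toCx.d (i + j) (smul a m) =
      toCx.cst (by omega) (smul (A.d i a) m) +
      (i.negOnePow : ℤ) • toCx.cst (by omega) (smul a (toCx.d j m))

namespace DGMod

variable {A : DGAlg R}

lemma smul_zero' (M : DGMod R A) {i j : ℤ} (a : A.X i) :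
    M.smul a (0 : M.X j) = 0 := by
  have h := M.smul_add a (0 : M.X j) 0
  rw [add_zero] at h
  exact (left_eq_add.mp h)

/-- scalar multiplication by `a ∈ A_i`, as an `R`-linear map -/
def smulL (M : DGMod R A) {i j : ℤ} (a : A.X i) : M.X j →ₗ[R] M.X (i + j) where
  toFun m := M.smul a m
  map_add' := M.smul_add a
  map_smul' r m := M.rsmul_smul r a m

end DGMod

variable {A : DGAlg R}

/-- A morphism of DG `A`-modules. -/
structure DGHom (M N : DGMod R A) where
  f : ∀ i, M.X i →ₗ[R] N.X i
  comm_d : ∀ i m, f (i - 1) (M.d i m) = N.d i (f i m)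
  comm_smul : ∀ {i j} (a : A.X i) (m : M.X j), f (i + j) (M.smul a m) = N.smul a (f j m)

namespace DGHom

variable {M N P : DGMod R A}

def comp (g : DGHom N P) (h : DGHom M N) : DGHom M P where
  f i := (g.f i).comp (h.f i)
  comm_d i m := by simp [h.comm_d, g.comm_d]
  comm_smul {i j} a m := by simp [h.comm_smul, g.comm_smul]

instance : Zero (DGHom M N) :=
  ⟨{ f := fun _ => 0
     comm_d := by intro i m; simp
     comm_smul := by intro i j a m; simp [N.smul_zero'] }⟩

instance : Add (DGHom M N) :=
  ⟨fun g h =>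
    { f := fun i => g.f i + h.f i
      comm_d := by intro i m; simp [g.comm_d, h.comm_d]
      comm_smul := by intro i j a m; simp [g.comm_smul, h.comm_smul, N.smul_add] }⟩

instance : Neg (DGHom M N) :=
  ⟨fun g =>
    { f := fun i => -g.f i
      comm_d := by intro i m; simp [g.comm_d]
      comm_smul := by
        intro i j a m
        have h0 := N.smul_add a (g.f j m) (-g.f j m)
        rw [add_neg_cancel, N.smul_zero'] at h0
        simp only [LinearMap.neg_apply, g.comm_smul]
        exact neg_eq_of_add_eq_zero_right h0.symm }⟩

instance : Sub (DGHom M N) := ⟨fun g h => g + -h⟩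

end DGHom

/-- A graded `A`-linear map of degree `0` (not necessarily a chain map). -/
structure GH0 (M N : DGMod R A) where
  f : ∀ i, M.X i →ₗ[R] N.X i
  comm_smul : ∀ {i j} (a : A.X i) (m : M.X j), f (i + j) (M.smul a m) = N.smul a (f j m)

/-- A graded `A`-linear map of degree `-1` (with the Koszul sign rule). -/
structure GHneg (M N : DGMod R A) where
  f : ∀ i, M.X i →ₗ[R] N.X (i - 1)
  comm_smul : ∀ {i j} (a : A.X i) (m : M.X j),
    f (i + j) (M.smul a m) = (i.negOnePow : ℤ) • N.cst (by omega) (N.smul a (f j m))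

/-- A graded `A`-linear map of degree `n` (with the Koszul sign rule):
the degree `n` component of the Hom complex `Hom_A(M,N)`. -/
structure GHn (M N : DGMod R A) (n : ℤ) where
  f : ∀ i, M.X i →ₗ[R] N.X (i + n)
  comm_smul : ∀ {i j} (a : A.X i) (m : M.X j),
    f (i + j) (M.smul a m) = ((i * n).negOnePow : ℤ) • N.cst (by omega) (N.smul a (f j m))

namespace GHneg

variable {M N : DGMod R A}

instance : Zero (GHneg M N) :=
  ⟨{ f := fun _ => 0
     comm_smul := by intro i j a m; simp [N.smul_zero'] }⟩

instance : Add (GHneg M N) :=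
  ⟨fun g h =>
    { f := fun i => g.f i + h.f i
      comm_smul := by
        intro i j a m
        simp only [LinearMap.add_apply, g.comm_smul, h.comm_smul, ← smul_add, ← map_add,
          N.smul_add] }⟩

instance : Neg (GHneg M N) :=
  ⟨fun g =>
    { f := fun i => -g.f i
      comm_smul := by
        intro i j a m
        have h0 := N.smul_add a (g.f j m) (-(g.f j m))
        rw [add_neg_cancel, N.smul_zero'] at h0
        have h1 : N.smul a (-(g.f j m)) = -N.smul a (g.f j m) :=
          (neg_eq_of_add_eq_zero_right h0.symm).symm
        simp only [LinearMap.neg_apply, g.comm_smul, h1, map_neg, smul_neg] }⟩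

instance : Sub (GHneg M N) := ⟨fun g h => g + -h⟩

/-- `λ` is a cycle of degree `-1` in `Hom_A(M,N)`: `∂^N ∘ λ + λ ∘ ∂^M = 0`. -/
def isCycle (l : GHneg M N) : Prop :=
  ∀ i m, N.d (i - 1) (l.f i m) + l.f (i - 1) (M.d i m) = 0

/-- `λ` is a boundary of degree `-1` in `Hom_A(M,N)`:
`λ = ∂^N ∘ v − v ∘ ∂^M` for a degree `0` graded `A`-linear map `v`. -/
def isBdry (l : GHneg M N) : Prop :=
  ∃ v : GH0 M N, ∀ i m, l.f i m = N.d i (v.f i m) - v.f (i - 1) (M.d i m)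

end GHneg

namespace GHn

variable {M N : DGMod R A} {n : ℤ}

instance : Zero (GHn M N n) :=
  ⟨{ f := fun _ => 0
     comm_smul := by intro i j a m; simp [N.smul_zero'] }⟩

instance : Add (GHn M N n) :=
  ⟨fun g h =>
    { f := fun i => g.f i + h.f i
      comm_smul := by
        intro i j a m
        simp only [LinearMap.add_apply, g.comm_smul, h.comm_smul, ← smul_add, ← map_add,
          N.smul_add] }⟩

instance : Neg (GHn M N n) :=
  ⟨fun g =>
    { f := fun i => -g.f i
      comm_smul := by
        intro i j a m
        have h0 := N.smul_add a (g.f j m) (-(g.f j m))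
        rw [add_neg_cancel, N.smul_zero'] at h0
        have h1 : N.smul a (-(g.f j m)) = -N.smul a (g.f j m) :=
          (neg_eq_of_add_eq_zero_right h0.symm).symm
        simp only [LinearMap.neg_apply, g.comm_smul, h1, map_neg, smul_neg] }⟩

instance : Sub (GHn M N n) := ⟨fun g h => g + -h⟩

/-- the cycle condition in degree `n` of the Hom complex: `∂^N ∘ f = (−1)^n f ∘ ∂^M` -/
def isCycle (l : GHn M N n) : Prop :=
  ∀ i m, N.d (i + n) (l.f i m) = (n.negOnePow : ℤ) • N.cst (by omega) (l.f (i - 1) (M.d i m))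

/-- the boundary condition in degree `n` of the Hom complex -/
def isBdry (l : GHn M N n) : Prop :=
  ∃ v : GHn M N (n + 1), ∀ i m,
    l.f i m = N.cst (by omega) (N.d (i + (n + 1)) (v.f i m)) -
      ((n + 1).negOnePow : ℤ) • N.cst (by omega) (v.f (i - 1) (M.d i m))

end GHn

lemma DGHom.f_cst {M N : DGMod R A} (p : DGHom M N) {u v : ℤ} (h : u = v) (x : M.X u) :
    p.f v (M.cst h x) = N.cst h (p.f u x) := by subst h; rfl

namespace GHn

/-- postcomposition with a morphism, on degree `n` graded maps -/
def map {Q M N : DGMod R A} (p : DGHom M N) (l : GHn Q M n) : GHn Q N n where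
  f i := (p.f (i + n)).comp (l.f i)
  comm_smul := by
    intro i j a m
    show p.f (i + j + n) (l.f (i + j) _) = _
    rw [l.comm_smul a m, map_zsmul, DGHom.f_cst, p.comm_smul]
    rfl

end GHn

/-- A short exact sequence (extension) of DG `A`-modules `0 → N → E → Q → 0`. -/
structure DGExt (Q N : DGMod R A) where
  E : DGMod R A
  ι : DGHom N E
  p : DGHom E Q
  inj : ∀ i, Injective (ι.f i)
  surj : ∀ i, Surjective (p.f i)
  exact : ∀ i, LinearMap.range (ι.f i) = LinearMap.ker (p.f i)

namespace DGExt

variable {Q N : DGMod R A}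

/-- an extension splits if the inclusion admits a retraction which is a morphism
of DG `A`-modules -/
def Splits (e : DGExt Q N) : Prop :=
  ∃ h : DGHom e.E N, ∀ i x, h.f i (e.ι.f i x) = x

/-- an extension is graded-split if there are degree `0` graded `A`-linear maps
`h, k` with `h∘ι = id`, `p∘k = id`, `h∘k = 0` and `ι∘h + k∘p = id` -/
def GradedSplit (e : DGExt Q N) : Prop :=
  ∃ (h : GH0 e.E N) (k : GH0 Q e.E),
    (∀ i x, h.f i (e.ι.f i x) = x) ∧
    (∀ i q, e.p.f i (k.f i q) = q) ∧
    (∀ i q, h.f i (k.f i q) = 0) ∧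
    (∀ i x, e.ι.f i (h.f i x) + k.f i (e.p.f i x) = x)

/-- Yoneda equivalence of extensions: an isomorphism of DG `A`-modules compatible with
the identity maps on `N` and `Q` -/
def Equiv' (e e' : DGExt Q N) : Prop :=
  ∃ φ : DGHom e.E e'.E, (∀ i, Bijective (φ.f i)) ∧
    (∀ i x, φ.f i (e.ι.f i x) = e'.ι.f i x) ∧
    (∀ i x, e'.p.f i (φ.f i x) = e.p.f i x)

end DGExt

/-- `Q` is graded-projective: `Hom_A(Q,−)` preserves surjectivity of morphisms. -/
def GradedProjective (Q : DGMod R A) : Prop :=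
  ∀ (M N : DGMod R A) (p : DGHom M N), (∀ i, Surjective (p.f i)) →
    ∀ (n : ℤ) (g : GHn Q N n), ∃ h : GHn Q M n, ∀ i m, p.f (i + n) (h.f i m) = g.f i m

/-- `P` is categorically projective: a projective object of the abelian category of
DG `A`-modules. -/
def CatProjective (P : DGMod R A) : Prop :=
  ∀ (M N : DGMod R A) (p : DGHom M N), (∀ i, Surjective (p.f i)) →
    ∀ g : DGHom P N, ∃ h : DGHom P M, ∀ i x, p.f i (h.f i x) = g.f i x

/-- `M` is acyclic (homologically trivial). -/
def AcyclicD (M : DGMod R A) : Prop :=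
  ∀ i x, M.d i x = 0 → ∃ y, x = M.cst (by omega) (M.d (i + 1) y)

/-- Elementwise formulation of "`p` induces isomorphisms on all homology groups". -/
def QuasiIsoD {M N : DGMod R A} (p : DGHom M N) : Prop :=
  ∀ i, (∀ z, N.d i z = 0 → ∃ x, M.d i x = 0 ∧
        ∃ w, z - p.f i x = N.cst (by omega) (N.d (i + 1) w)) ∧
    (∀ x, M.d i x = 0 → (∃ w, p.f i x = N.cst (by omega) (N.d (i + 1) w)) →
        ∃ v, x = M.cst (by omega) (M.d (i + 1) v))

/-- `Q` is semi-projective: it is graded-projective and `Hom_A(Q,−)` sends surjective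
quasiisomorphisms to surjective quasiisomorphisms. -/
def SemiProjective (Q : DGMod R A) : Prop :=
  GradedProjective Q ∧
  ∀ (M N : DGMod R A) (p : DGHom M N), (∀ i, Surjective (p.f i)) → QuasiIsoD p →
    ((∀ (n : ℤ) (g : GHn Q N n), ∃ h : GHn Q M n, ∀ i m, (GHn.map p h).f i m = g.f i m) ∧
     (∀ n : ℤ,
        (∀ g : GHn Q N n, g.isCycle →
          ∃ h : GHn Q M n, h.isCycle ∧ (g - GHn.map p h).isBdry) ∧
        (∀ h : GHn Q M n, h.isCycle → (GHn.map p h).isBdry → h.isBdry)))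

/-- the underlying complex of `N ⊕_λ Q` -/
def twistCx (N Q : DGMod R A) (l : GHneg Q N) (hc : l.isCycle) : Cx R where
  X i := N.X i × Q.X i
  acg i := inferInstance
  mod i := inferInstance
  d i := LinearMap.prod
    ((N.d i).comp (LinearMap.fst _ _ _) + (l.f i).comp (LinearMap.snd _ _ _))
    ((Q.d i).comp (LinearMap.snd _ _ _))
  d_sq := by
    intro i x
    have h := hc i x.2
    simp only [LinearMap.prod_apply, LinearMap.add_apply, LinearMap.coe_comp, comp_apply,
      LinearMap.fst_apply, LinearMap.snd_apply, Pi.prod]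
    rw [Prod.ext_iff]
    constructor
    · show (N.d (i-1)) ((N.d i) x.1 + (l.f i) x.2) + (l.f (i - 1)) ((Q.d i) x.2) = 0
      rw [map_add, N.d_sq, zero_add, h]
    · exact Q.d_sq i x.2

lemma twistCx_cst (N Q : DGMod R A) (l : GHneg Q N) (hc : l.isCycle) {u v : ℤ} (h : u = v)
    (x : N.X u × Q.X u) :
    (twistCx N Q l hc).cst h x = (N.cst h x.1, Q.cst h x.2) := by subst h; rfl

/-- The DG module `N ⊕_λ Q`: underlying graded module `N ⊕ Q`, with differential
`[[∂^N, λ],[0, ∂^Q]]`, attached to a degree `-1` cycle `λ ∈ Hom_A(Q,N)_{-1}`. -/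
def stdMod (N Q : DGMod R A) (l : GHneg Q N) (hc : l.isCycle) : DGMod R A where
  toCx := twistCx N Q l hc
  smul {i j} a m := (N.smul a m.1, Q.smul a m.2)
  smul_add := by
    intro i j a m m'
    refine Prod.ext ?_ ?_
    · show N.smul a (m.1 + m'.1) = N.smul a m.1 + N.smul a m'.1
      exact N.smul_add a m.1 m'.1
    · show Q.smul a (m.2 + m'.2) = Q.smul a m.2 + Q.smul a m'.2
      exact Q.smul_add a m.2 m'.2
  add_smul := by
    intro i j a a' m
    refine Prod.ext ?_ ?_
    · exact N.add_smul a a' m.1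
    · exact Q.add_smul a a' m.2
  smul_rsmul := by
    intro i j r a m
    refine Prod.ext ?_ ?_
    · exact N.smul_rsmul r a m.1
    · exact Q.smul_rsmul r a m.2
  rsmul_smul := by
    intro i j r a m
    refine Prod.ext ?_ ?_
    · show N.smul a (r • m.1) = r • N.smul a m.1
      exact N.rsmul_smul r a m.1
    · show Q.smul a (r • m.2) = r • Q.smul a m.2
      exact Q.rsmul_smul r a m.2
  one_smul := by
    intro j m
    rw [twistCx_cst]
    exact Prod.ext (N.one_smul m.1) (Q.one_smul m.2)
  mul_smul := by
    intro i j k a b m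
    rw [twistCx_cst]
    exact Prod.ext (N.mul_smul a b m.1) (Q.mul_smul a b m.2)
  leibniz := by
    intro i j a m
    rw [twistCx_cst, twistCx_cst]
    simp only [LinearMap.prod_apply, LinearMap.add_apply, LinearMap.coe_comp, comp_apply,
      LinearMap.fst_apply, LinearMap.snd_apply, Pi.prod, Prod.smul_def, Prod.mk_add_mk]
    refine Prod.ext ?_ ?_
    · show N.d (i + j) (N.smul a m.1) + l.f (i + j) (Q.smul a m.2) =
        N.cst _ (N.smul (A.d i a) m.1) +
          (i.negOnePow : ℤ) • N.cst _ (N.smul a (N.d j m.1 + l.f j m.2))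
      rw [N.leibniz, l.comm_smul, N.smul_add, map_add, smul_add]
      abel
    · show Q.d (i + j) (Q.smul a m.2) =
        Q.cst _ (Q.smul (A.d i a) m.2) + (i.negOnePow : ℤ) • Q.cst _ (Q.smul a (Q.d j m.2))
      rw [Q.leibniz]

/-- The graded-split extension `0 → N → N ⊕_λ Q → Q → 0` attached to a cycle `λ`. -/
def stdExt (N Q : DGMod R A) (l : GHneg Q N) (hc : l.isCycle) : DGExt Q N where
  E := stdMod N Q l hc
  ι := { f := fun i => LinearMap.inl _ _ _
         comm_d := by
           intro i m
           refine Prod.ext ?_ ?_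
           · show N.d i m = N.d i m + l.f i 0
             rw [map_zero, add_zero]
           · show (0 : Q.X (i - 1)) = Q.d i 0
             rw [map_zero]
         comm_smul := by
           intro i j a m
           refine Prod.ext ?_ ?_
           · rfl
           · exact (Q.smul_zero' a).symm }
  p := { f := fun i => LinearMap.snd _ _ _
         comm_d := by intro i m; rfl
         comm_smul := by intro i j a m; rfl }
  inj := fun i => LinearMap.inl_injective
  surj := fun i => LinearMap.snd_surjective
  exact := fun i => LinearMap.range_inl _ _ _

/-- `t` is a Baer sum of `e` and `e'`: it is obtained from the pullback `e.E ×_Q e'.E`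
by dividing out the antidiagonal copy of `N` (image of `x ↦ (−x, x)`). -/
def IsBaerSum {Q N : DGMod R A} (e e' t : DGExt Q N) : Prop :=
  ∃ (P : DGMod R A) (p1 : DGHom P e.E) (p2 : DGHom P e'.E) (γ : DGHom N P)
      (τ : DGHom P t.E),
    -- `P` is the pullback of `e.p` and `e'.p`:
    (∀ i x, e.p.f i (p1.f i x) = e'.p.f i (p2.f i x)) ∧
    (∀ i, Injective fun x : P.X i => (p1.f i x, p2.f i x)) ∧
    (∀ (i : ℤ) (u : e.E.X i) (v : e'.E.X i), e.p.f i u = e'.p.f i v →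
      ∃ x : P.X i, p1.f i x = u ∧ p2.f i x = v) ∧
    -- `γ` is the antidiagonal embedding of `N` into the pullback:
    (∀ i x, p1.f i (γ.f i x) = -(e.ι.f i x)) ∧
    (∀ i x, p2.f i (γ.f i x) = e'.ι.f i x) ∧
    -- `τ` realizes `t.E` as the quotient of the pullback by the antidiagonal `N`:
    (∀ i, Surjective (τ.f i)) ∧
    (∀ i, LinearMap.range (γ.f i) = LinearMap.ker (τ.f i)) ∧
    -- compatibility with the structure maps of `t`:
    (∀ (i : ℤ) (n : N.X i) (x : P.X i),
      p1.f i x = e.ι.f i n → p2.f i x = 0 → τ.f i x = t.ι.f i n) ∧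
    (∀ i x, t.p.f i (τ.f i x) = e.p.f i (p1.f i x))

lemma GHneg.isCycle_add {R : Type} [CommRing R] {A : DGAlg R} {N Q : DGMod R A}
    {l l' : GHneg Q N} (hc : l.isCycle) (hc' : l'.isCycle) : (l + l').isCycle := by
  intro i m
  have h1 := hc i m
  have h2 := hc' i m
  show N.d (i - 1) (l.f i m + l'.f i m) +
    ((l.f (i - 1)) ((Q.d i) m) + (l'.f (i - 1)) ((Q.d i) m)) = 0
  rw [map_add]
  have h3 : ((N.d (i - 1)) ((l.f i) m) + (l.f (i - 1)) ((Q.d i) m)) +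
      ((N.d (i - 1)) ((l'.f i) m) + (l'.f (i - 1)) ((Q.d i) m)) = 0 := by
    rw [h1, h2, add_zero]
  rw [← h3]
  abel

lemma Cx.cst_cst (C : Cx R) {i j k : ℤ} (h : i = j) (h' : j = k) (x : C.X i) :
    C.cst h' (C.cst h x) = C.cst (h.trans h') x := by subst h h'; rfl

lemma DGMod.smul_cst (M : DGMod R A) {i j k : ℤ} (a : A.X i) (h : j = k) (m : M.X j) :
    M.smul a (M.cst h m) = M.cst (by omega) (M.smul a m) := by subst h; rfl

lemma DGMod.smul_sub (M : DGMod R A) {i j : ℤ} (a : A.X i) (m m' : M.X j) :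
    M.smul a (m - m') = M.smul a m - M.smul a m' := map_sub (M.smulL a) m m'

lemma GH0.f_cst {M N : DGMod R A} (v : GH0 M N) {u w : ℤ} (h : u = w) (x : M.X u) :
    v.f w (M.cst h x) = N.cst h (v.f u x) := by subst h; rfl

lemma GHneg.sub_f {M N : DGMod R A} (l l' : GHneg M N) (i : ℤ) (m : M.X i) :
    (l - l').f i m = l.f i m - l'.f i m :=
  (sub_eq_add_neg _ _).symm

def GHn.id (M : DGMod R A) : GHn M M 0 where
  f i := M.cst (add_zero i).symm
  comm_smul a m := by simp [M.smul_cst, Cx.cst_cst]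

def GHn.toGH0 {M N : DGMod R A} (g : GHn M N 0) : GH0 M N where
  f i := N.cst (add_zero i) ∘ₗ g.f i
  comm_smul a m := by simp [g.comm_smul, N.smul_cst, Cx.cst_cst]

namespace GH0

variable {M N P : DGMod R A}

def dHom (k : GH0 M P) : GHneg M P where
  f i := P.d i ∘ₗ k.f i - k.f (i - 1) ∘ₗ M.d i
  comm_smul {i j} a m := by
    simp only [LinearMap.sub_apply, LinearMap.comp_apply, k.comm_smul, P.leibniz, M.leibniz,
      map_add, map_zsmul, GH0.f_cst, P.smul_sub, map_sub, smul_sub]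
    abel

lemma dHom_apply (k : GH0 M P) (i : ℤ) (m : M.X i) :
    k.dHom.f i m = P.d i (k.f i m) - k.f (i - 1) (M.d i m) := rfl

lemma isCycle_dHom (k : GH0 M P) : k.dHom.isCycle := by
  intro i m
  simp only [dHom_apply, map_sub, P.d_sq, M.d_sq, map_zero]
  abel

def compNeg (h : GH0 P N) (l : GHneg M P) : GHneg M N where
  f i := h.f (i - 1) ∘ₗ l.f i
  comm_smul a m := by
    simp only [LinearMap.comp_apply, l.comm_smul, map_zsmul, GH0.f_cst, h.comm_smul]

lemma compNeg_apply (h : GH0 P N) (l : GHneg M P) (i : ℤ) (m : M.X i) :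
    (h.compNeg l).f i m = h.f (i - 1) (l.f i m) := rfl

end GH0

namespace LinearMap

variable {S X Y Z : Type*} [Semiring S] [AddCommMonoid X] [AddCommMonoid Y] [AddCommMonoid Z]
  [Module S X] [Module S Y] [Module S Z]

noncomputable def liftOfInjective (f : Y →ₗ[S] X) (hf : Injective f) (g : Z →ₗ[S] X)
    (hg : ∀ z, g z ∈ range f) : Z →ₗ[S] Y :=
  (LinearEquiv.ofInjective f hf).symm.toLinearMap ∘ₗ g.codRestrict (range f) hg

@[simp]
lemma apply_liftOfInjective (f : Y →ₗ[S] X) (hf : Injective f) (g : Z →ₗ[S] X)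
    (hg : ∀ z, g z ∈ range f) (z : Z) : f (liftOfInjective f hf g hg z) = g z :=
  LinearEquiv.ofInjective_symm_apply (h := hf) f _

end LinearMap

namespace DGHom

variable {M N : DGMod R A}

protected def id (M : DGMod R A) : DGHom M M where
  f _ := LinearMap.id
  comm_d _ _ := rfl
  comm_smul _ _ := rfl

noncomputable def inv (p : DGHom M N) (hp : ∀ i, Bijective (p.f i)) : DGHom N M where
  f i := (LinearEquiv.ofBijective (p.f i) (hp i)).symm.toLinearMap
  comm_d i n := (hp (i - 1)).1 (by simp [p.comm_d])
  comm_smul {i j} a n := (hp (i + j)).1 (by simp [p.comm_smul])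

lemma apply_inv (p : DGHom M N) (hp : ∀ i, Bijective (p.f i)) (i : ℤ) (n : N.X i) :
    p.f i ((p.inv hp).f i n) = n :=
  (LinearEquiv.ofBijective (p.f i) (hp i)).apply_symm_apply n

lemma bijective_inv (p : DGHom M N) (hp : ∀ i, Bijective (p.f i)) (i : ℤ) :
    Bijective ((p.inv hp).f i) :=
  (LinearEquiv.ofBijective (p.f i) (hp i)).symm.bijective

end DGHom

namespace DGExt

variable {Q N : DGMod R A} (e : DGExt Q N)

lemma mem_range_ι_iff {i : ℤ} {z : e.E.X i} :
    z ∈ LinearMap.range (e.ι.f i) ↔ e.p.f i z = 0 := by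
  rw [e.exact]; rfl

lemma p_ι (i : ℤ) (n : N.X i) : e.p.f i (e.ι.f i n) = 0 :=
  e.mem_range_ι_iff.mp ⟨n, rfl⟩

lemma bijective_of_compat {e' : DGExt Q N} (φ : DGHom e.E e'.E)
    (hι : ∀ i n, φ.f i (e.ι.f i n) = e'.ι.f i n)
    (hp : ∀ i x, e'.p.f i (φ.f i x) = e.p.f i x) (i : ℤ) : Bijective (φ.f i) := by
  refine ⟨(injective_iff_map_eq_zero (φ.f i)).mpr fun x hx => ?_, fun y => ?_⟩
  · obtain ⟨n, rfl⟩ := e.mem_range_ι_iff.mpr (by rw [← hp, hx, map_zero])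
    rw [hι, ← map_zero (e'.ι.f i)] at hx
    rw [e'.inj i hx, map_zero]
  · obtain ⟨x, hx⟩ := e.surj i (e'.p.f i y)
    obtain ⟨n, hn⟩ := e'.mem_range_ι_iff.mpr (show e'.p.f i (y - φ.f i x) = 0 by
      rw [map_sub, hp, hx, sub_self])
    exact ⟨x + e.ι.f i n, by rw [map_add, hι, hn, add_sub_cancel]⟩

lemma equiv'_of_compat {e' : DGExt Q N} (φ : DGHom e.E e'.E)
    (hι : ∀ i n, φ.f i (e.ι.f i n) = e'.ι.f i n)
    (hp : ∀ i x, e'.p.f i (φ.f i x) = e.p.f i x) : e.Equiv' e' :=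
  ⟨φ, e.bijective_of_compat φ hι hp, hι, hp⟩

lemma Equiv'.refl : e.Equiv' e :=
  ⟨DGHom.id e.E, fun _ => bijective_id, fun _ _ => rfl, fun _ _ => rfl⟩

lemma Equiv'.symm {e₁ e₂ : DGExt Q N} (h : e₁.Equiv' e₂) : e₂.Equiv' e₁ := by
  obtain ⟨φ, hφ, hι, hp⟩ := h
  refine ⟨φ.inv hφ, φ.bijective_inv hφ, fun i n => (hφ i).1 ?_, fun i x => ?_⟩
  · rw [φ.apply_inv, hι]
  · rw [← hp, φ.apply_inv]

lemma Equiv'.trans {e₁ e₂ e₃ : DGExt Q N} (h : e₁.Equiv' e₂) (h' : e₂.Equiv' e₃) :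
    e₁.Equiv' e₃ := by
  obtain ⟨φ, hφ, hι, hp⟩ := h
  obtain ⟨ψ, hψ, hι', hp'⟩ := h'
  refine ⟨ψ.comp φ, fun i => (hψ i).comp (hφ i), fun i n => ?_, fun i x => ?_⟩
  · exact (congrArg (ψ.f i) (hι i n)).trans (hι' i n)
  · exact (hp' i _).trans (hp i x)

lemma equiv'_equivalence (Q N : DGMod R A) : Equivalence (Equiv' (Q := Q) (N := N)) :=
  ⟨Equiv'.refl, Equiv'.symm, Equiv'.trans⟩

noncomputable def retraction (k : GH0 Q e.E) (hk : ∀ i q, e.p.f i (k.f i q) = q) :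
    GH0 e.E N where
  f i := LinearMap.liftOfInjective (e.ι.f i) (e.inj i) (LinearMap.id - k.f i ∘ₗ e.p.f i)
    fun z => e.mem_range_ι_iff.mpr (by simp [hk])
  comm_smul {i j} a z := e.inj (i + j) (by
    simp only [LinearMap.apply_liftOfInjective, e.ι.comm_smul, LinearMap.sub_apply,
      LinearMap.id_apply, LinearMap.comp_apply, e.p.comm_smul, k.comm_smul, e.E.smul_sub])

lemma ι_retraction (k : GH0 Q e.E) (hk : ∀ i q, e.p.f i (k.f i q) = q) (i : ℤ) (z : e.E.X i) :
    e.ι.f i ((e.retraction k hk).f i z) = z - k.f i (e.p.f i z) :=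
  LinearMap.apply_liftOfInjective ..

lemma gradedSplit_of_section (k : GH0 Q e.E) (hk : ∀ i q, e.p.f i (k.f i q) = q) :
    e.GradedSplit := by
  refine ⟨e.retraction k hk, k, fun i n => e.inj i ?_, hk, fun i q => e.inj i ?_, fun i z => ?_⟩
  · rw [ι_retraction, p_ι, map_zero, sub_zero]
  · rw [ι_retraction, hk, sub_self, map_zero]
  · rw [ι_retraction, sub_add_cancel]

lemma exists_section_of_gradedProjective (hQ : GradedProjective Q) :
    ∃ k : GH0 Q e.E, ∀ i q, e.p.f i (k.f i q) = q := by
  obtain ⟨k, hk⟩ := hQ e.E Q e.p e.surj 0 (GHn.id Q)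
  refine ⟨k.toGH0, fun i q => ?_⟩
  simp only [GHn.toGH0, LinearMap.comp_apply, DGHom.f_cst, hk]
  rw [GHn.id, Cx.cst_cst]
  rfl

lemma gradedSplit_of_gradedProjective (hQ : GradedProjective Q) : e.GradedSplit :=
  have ⟨k, hk⟩ := e.exists_section_of_gradedProjective hQ
  e.gradedSplit_of_section k hk

variable {h : GH0 e.E N} {k : GH0 Q e.E}

lemma ι_compNeg_dHom (hk : ∀ i q, e.p.f i (k.f i q) = q)
    (hhk : ∀ i x, e.ι.f i (h.f i x) + k.f i (e.p.f i x) = x) (i : ℤ) (m : Q.X i) :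
    e.ι.f (i - 1) ((h.compNeg k.dHom).f i m) = k.dHom.f i m := by
  have hp : e.p.f (i - 1) (k.dHom.f i m) = 0 := by
    rw [GH0.dHom_apply, map_sub, e.p.comm_d, hk, hk, sub_self]
  simpa [hp, GH0.compNeg_apply] using hhk (i - 1) (k.dHom.f i m)

lemma isCycle_compNeg_dHom (hk : ∀ i q, e.p.f i (k.f i q) = q)
    (hhk : ∀ i x, e.ι.f i (h.f i x) + k.f i (e.p.f i x) = x) : (h.compNeg k.dHom).isCycle :=
  fun i m => e.inj _ (by
    rw [map_add, map_zero, e.ι.comm_d, e.ι_compNeg_dHom hk hhk, e.ι_compNeg_dHom hk hhk]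
    exact k.isCycle_dHom i m)

lemma exists_stdExt_equiv_of_gradedSplit (hs : e.GradedSplit) :
    ∃ (l : GHneg Q N) (hc : l.isCycle), (stdExt N Q l hc).Equiv' e := by
  obtain ⟨h, k, -, hk, -, hhk⟩ := hs
  have hc := e.isCycle_compNeg_dHom hk hhk
  let φ : DGHom (stdExt N Q _ hc).E e.E :=
    { f := fun i => e.ι.f i ∘ₗ LinearMap.fst _ _ _ + k.f i ∘ₗ LinearMap.snd _ _ _
      comm_d := fun i (z : N.X i × Q.X i) => by
        show e.ι.f (i - 1) (N.d i z.1 + (h.compNeg k.dHom).f i z.2) + k.f (i - 1) (Q.d i z.2) =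
          e.E.d i (e.ι.f i z.1 + k.f i z.2)
        rw [map_add, map_add, e.ι.comm_d, e.ι_compNeg_dHom hk hhk, GH0.dHom_apply]
        abel
      comm_smul := fun a (z : N.X _ × Q.X _) => by
        show e.ι.f _ (N.smul a z.1) + k.f _ (Q.smul a z.2) = e.E.smul a (e.ι.f _ z.1 + k.f _ z.2)
        rw [e.ι.comm_smul, k.comm_smul, e.E.smul_add] }
  have hι : ∀ i n, φ.f i ((stdExt N Q _ hc).ι.f i n) = e.ι.f i n :=
    fun i n => show e.ι.f i n + k.f i 0 = e.ι.f i n by rw [map_zero, add_zero]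
  have hp : ∀ i z, e.p.f i (φ.f i z) = (stdExt N Q _ hc).p.f i z :=
    fun i (z : N.X i × Q.X i) => show e.p.f i (e.ι.f i z.1 + k.f i z.2) = z.2 by
      rw [map_add, p_ι, hk, zero_add]
  exact ⟨_, hc, (stdExt N Q _ hc).equiv'_of_compat φ hι hp⟩

end DGExt

section TwistedExtension

variable {N M : DGMod R A}

lemma stdExt_gradedSplit {l : GHneg M N} (hc : l.isCycle) : (stdExt N M l hc).GradedSplit :=
  ⟨⟨fun _ => LinearMap.fst _ _ _, fun _ _ => rfl⟩,
    ⟨fun _ => LinearMap.inr _ _ _, fun a _ => Prod.ext (N.smul_zero' a).symm rfl⟩,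
    fun _ _ => rfl, fun _ _ => rfl, fun _ _ => rfl,
    fun _ x => Prod.ext (add_zero x.1) (zero_add x.2)⟩

lemma stdExt_equiv_of_isBdry {l l' : GHneg M N} (hc : l.isCycle) (hc' : l'.isCycle)
    (hb : (l - l').isBdry) : (stdExt N M l hc).Equiv' (stdExt N M l' hc') := by
  obtain ⟨v, hv⟩ := hb
  let shear : DGHom (stdExt N M l hc).E (stdExt N M l' hc').E :=
    { f := fun i => LinearMap.prod (LinearMap.fst _ _ _ + v.f i ∘ₗ LinearMap.snd _ _ _)
        (LinearMap.snd _ _ _)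
      comm_d := fun i (z : N.X i × M.X i) => Prod.ext (by
        show N.d i z.1 + l.f i z.2 + v.f (i - 1) (M.d i z.2) =
          N.d i (z.1 + v.f i z.2) + l'.f i z.2
        rw [map_add, sub_eq_iff_eq_add'.mp ((GHneg.sub_f l l' i z.2).symm.trans (hv i z.2))]
        abel) rfl
      comm_smul := fun a (z : N.X _ × M.X _) => Prod.ext (by
        show N.smul a z.1 + v.f _ (M.smul a z.2) = N.smul a (z.1 + v.f _ z.2)
        rw [v.comm_smul, N.smul_add]) rfl }
  exact DGExt.equiv'_of_compat _ shear
    (fun i n => Prod.ext (show n + v.f i 0 = n by rw [map_zero, add_zero]) rfl) fun _ _ => rfl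

lemma isBdry_of_stdExt_equiv {l l' : GHneg M N} (hc : l.isCycle) (hc' : l'.isCycle)
    (he : (stdExt N M l hc).Equiv' (stdExt N M l' hc')) : (l - l').isBdry := by
  obtain ⟨φ, -, hι, hp⟩ := he
  have hsnd : ∀ i (z : N.X i × M.X i), (φ.f i z).2 = z.2 := hp
  have hfst : ∀ i (z : N.X i × M.X i), (φ.f i z).1 = z.1 + (φ.f i (0, z.2)).1 := by
    intro i z
    have hz : z = (stdExt N M l hc).ι.f i z.1 + (show (stdExt N M l hc).E.X i from (0, z.2)) :=
      Prod.ext (show z.1 = z.1 + 0 from (add_zero z.1).symm)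
        (show z.2 = 0 + z.2 from (zero_add z.2).symm)
    conv_lhs => rw [hz, map_add, hι]
    rfl
  refine ⟨⟨fun i => LinearMap.fst _ _ _ ∘ₗ φ.f i ∘ₗ LinearMap.inr _ _ _, fun {i j} a m => ?_⟩,
    fun i m => ?_⟩
  · have h0 : @Eq ((stdExt N M l hc).E.X (i + j)) (0, M.smul a m)
        ((stdExt N M l hc).E.smul a ((0, m) : N.X j × M.X j)) :=
      Prod.ext (N.smul_zero' a).symm rfl
    exact congrArg Prod.fst ((congrArg (φ.f (i + j)) h0).trans (φ.comm_smul a _))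
  · have hd := congrArg Prod.fst (φ.comm_d i ((0, m) : N.X i × M.X i))
    change (φ.f (i - 1) (N.d i 0 + l.f i m, M.d i m)).1 =
      N.d i (φ.f i (0, m)).1 + l'.f i (φ.f i (0, m)).2 at hd
    rw [hfst, hsnd, map_zero, zero_add] at hd
    rw [GHneg.sub_f]
    exact sub_eq_sub_iff_add_eq_add.mpr hd

end TwistedExtension

section BaerSum

variable {N M : DGMod R A} {l l' : GHneg M N} (hc : l.isCycle) (hc' : l'.isCycle)

lemma exists_pullback_section {P : DGMod R A} {p1 : DGHom P (stdExt N M l hc).E}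
    {p2 : DGHom P (stdExt N M l' hc').E} {γ : DGHom N P}
    (hinj : ∀ i, Injective fun x : P.X i => (p1.f i x, p2.f i x))
    (hex : ∀ (i : ℤ) (u : (stdExt N M l hc).E.X i) (v : (stdExt N M l' hc').E.X i),
      (stdExt N M l hc).p.f i u = (stdExt N M l' hc').p.f i v →
        ∃ x : P.X i, p1.f i x = u ∧ p2.f i x = v)
    (hγ1 : ∀ i n, p1.f i (γ.f i n) = -(stdExt N M l hc).ι.f i n)
    (hγ2 : ∀ i n, p2.f i (γ.f i n) = (stdExt N M l' hc').ι.f i n) :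
    ∃ s : ∀ i, (N.X i × M.X i) →ₗ[R] P.X i,
      (∀ i z, p1.f i (s i z) = z ∧ p2.f i (s i z) = ((0, z.2) : N.X i × M.X i)) ∧
      (∀ i (z : N.X i × M.X i), s (i - 1) (N.d i z.1 + (l.f i z.2 + l'.f i z.2), M.d i z.2) =
        P.d i (s i z) + γ.f (i - 1) (-l'.f i z.2)) ∧
      (∀ i j (a : A.X i) (z : N.X j × M.X j),
        s (i + j) (N.smul a z.1, M.smul a z.2) = P.smul a (s j z)) := by
  have hP : ∀ i (x y : P.X i), p1.f i x = p1.f i y → p2.f i x = p2.f i y → x = y :=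
    fun i x y h1 h2 => hinj i (Prod.ext h1 h2)
  let s (i : ℤ) : (N.X i × M.X i) →ₗ[R] P.X i :=
    LinearMap.liftOfInjective ((p1.f i).prod (p2.f i)) (hinj i)
      (LinearMap.id.prod (LinearMap.inr _ _ _ ∘ₗ LinearMap.snd _ _ _)) fun z =>
        have ⟨x, h1, h2⟩ := hex i z (0, z.2) rfl
        ⟨x, Prod.ext h1 h2⟩
  have hs : ∀ i z, p1.f i (s i z) = z ∧ p2.f i (s i z) = ((0, z.2) : N.X i × M.X i) :=
    fun i z => Prod.ext_iff.mp (LinearMap.apply_liftOfInjective ((p1.f i).prod (p2.f i)) _ _ _ z)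
  refine ⟨s, hs, fun i z => hP (i - 1) _ _ ?_ ?_, fun i j a z => hP (i + j) _ _ ?_ ?_⟩
  · rw [(hs _ _).1, map_add, p1.comm_d, (hs _ _).1, map_neg, map_neg, hγ1, neg_neg]
    exact Prod.ext
      (show N.d i z.1 + (l.f i z.2 + l'.f i z.2) = N.d i z.1 + l.f i z.2 + l'.f i z.2
        from (add_assoc _ _ _).symm)
      (show _ = M.d i z.2 + 0 by rw [add_zero])
  · rw [(hs _ _).2, map_add, p2.comm_d, (hs _ _).2, map_neg, map_neg, hγ2]
    exact Prod.ext (show 0 = N.d i 0 + l'.f i z.2 + -l'.f i z.2 by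
      rw [map_zero, zero_add, add_neg_cancel]) (show _ = M.d i z.2 + -0 by rw [neg_zero, add_zero])
  · rw [(hs _ _).1, p1.comm_smul, (hs _ _).1]
    rfl
  · rw [(hs _ _).2, p2.comm_smul, (hs _ _).2]
    exact Prod.ext (N.smul_zero' a).symm rfl

lemma stdExt_add_equiv_of_isBaerSum {t : DGExt M N}
    (hB : IsBaerSum (stdExt N M l hc) (stdExt N M l' hc') t) :
    (stdExt N M (l + l') (GHneg.isCycle_add hc hc')).Equiv' t := by
  obtain ⟨P, p1, p2, γ, τ, -, hinj, hex, hγ1, hγ2, -, hτk, hτι, hτp⟩ := hB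
  obtain ⟨s, hs, hs_d, hs_smul⟩ := exists_pullback_section hc hc' hinj hex hγ1 hγ2
  have hτγ : ∀ i n, τ.f i (γ.f i n) = 0 := fun i n =>
    (show γ.f i n ∈ LinearMap.ker (τ.f i) by rw [← hτk]; exact ⟨n, rfl⟩)
  let φ : DGHom (stdExt N M (l + l') (GHneg.isCycle_add hc hc')).E t.E :=
    { f := fun i => τ.f i ∘ₗ s i
      comm_d := fun i (z : N.X i × M.X i) => by
        show τ.f (i - 1) (s (i - 1) (N.d i z.1 + (l.f i z.2 + l'.f i z.2), M.d i z.2)) = _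
        rw [hs_d, map_add, hτγ, add_zero, τ.comm_d]
        rfl
      comm_smul := fun a (z : N.X _ × M.X _) => by
        show τ.f _ (s _ (N.smul a z.1, M.smul a z.2)) = _
        rw [hs_smul, τ.comm_smul]
        rfl }
  exact (stdExt N M (l + l') _).equiv'_of_compat φ
    (fun i n => hτι i n _ (hs i (n, 0)).1 (hs i (n, 0)).2)
    (fun i z => (hτp i _).trans (congrArg Prod.snd (hs i z).1))

end BaerSum

section Statement18

variable {R : Type} [CommRing R] {A : DGAlg R} (N M : DGMod R A)

/-- degree `-1` cycles in `Hom_A(M,N)` -/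
def Cyc := {l : GHneg M N // l.isCycle}

instance : Add (Cyc N M) :=
  ⟨fun x y => ⟨x.1 + y.1, GHneg.isCycle_add x.2 y.2⟩⟩

/-- `H_0(Hom_A(Σ⁻¹M,N)) ≅ H_{−1}(Hom_A(M,N))`: cycles modulo boundaries -/
def Hneg1 := Quot (fun x y : Cyc N M => (x.1 - y.1).isBdry)

/-- `YExt^1_A(M,N)`: extensions modulo Yoneda equivalence -/
def YExt1 := Quot (fun e e' : DGExt M N => e.Equiv' e')

theorem kappa_mono_image_graded_split :
    ∃ κ : Hneg1 N M → YExt1 N M,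
      Injective κ ∧
      (∀ (l : GHneg M N) (hc : l.isCycle),
        κ (Quot.mk _ (⟨l, hc⟩ : Cyc N M)) = Quot.mk _ (stdExt N M l hc)) ∧
      -- `κ` is additive (sums of cycles go to Baer sums):
      (∀ (x y : Cyc N M) (t : DGExt M N),
        IsBaerSum (stdExt N M x.1 x.2) (stdExt N M y.1 y.2) t →
          κ (Quot.mk _ (x + y)) = Quot.mk _ t) ∧
      -- the image of `κ` is the set of classes of graded-split extensions:
      (∀ z : YExt1 N M, (∃ x, κ x = z) ↔
        ∃ e : DGExt M N, e.GradedSplit ∧ z = Quot.mk _ e) ∧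
      -- if `M` is graded-projective, `κ` is bijective:
      (GradedProjective M → Surjective κ) := by
  let κ : Hneg1 N M → YExt1 N M := Quot.lift (fun x => Quot.mk _ (stdExt N M x.1 x.2))
    fun x y hxy => Quot.sound (stdExt_equiv_of_isBdry x.2 y.2 hxy)
  have himage : ∀ z, (∃ x, κ x = z) ↔ ∃ e : DGExt M N, e.GradedSplit ∧ z = Quot.mk _ e := by
    refine fun z => ⟨?_, ?_⟩
    · rintro ⟨⟨x⟩, rfl⟩
      exact ⟨_, stdExt_gradedSplit x.2, rfl⟩
    · rintro ⟨e, hs, rfl⟩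
      obtain ⟨l, hc, he⟩ := e.exists_stdExt_equiv_of_gradedSplit hs
      exact ⟨Quot.mk _ ⟨l, hc⟩, Quot.sound he⟩
  refine ⟨κ, ?_, fun _ _ => rfl,
    fun x y _ hB => Quot.sound (stdExt_add_equiv_of_isBaerSum x.2 y.2 hB), himage, ?_⟩
  · rintro ⟨x⟩ ⟨y⟩ hxy
    exact Quot.sound (isBdry_of_stdExt_equiv x.2 y.2
      ((DGExt.equiv'_equivalence M N).eqvGen_iff.mp (Quot.eq.mp hxy)))
  · rintro hM ⟨e⟩
    exact (himage _).mpr ⟨e, e.gradedSplit_of_gradedProjective hM, rfl⟩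

end Statement18
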